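/- arXiv:2304.04939 — 5 statements merged into one kernel-verified Lean document; each statement's English description precedes it below -/
import Mathlib

section
/- Let $\Delta \succ 0$ be a diagonal positive definite matrix and $L$ the Laplacian of a connected graph with incidence matrix $B$. Then $\lim_{\mathfrak{g} \to \infty} B^{\mathsf{T}} (\Delta + \mathfrak{g} L)^{-1} v = 0$ for every fixed vector $v$. -/
open Matrix Filter Topology

/-! Write `x = (Δ + g L)⁻¹ v` and `L = B W Bᵀ`. Pairing `(Δ + g L) x = v` with `x` gives the energy
identity `xᵀ Δ x + g ∑ₑ wₑ (Bᵀ x)ₑ² = x ⬝ v`, and weighted AM-GM bounds `x ⬝ v` by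
`xᵀ Δ x + ∑ᵢ vᵢ² / (4 dᵢ)`. Hence `g wₑ (Bᵀ x)ₑ²` stays bounded, so `(Bᵀ x)ₑ = O(g^{-1/2})`. -/

lemma mul_le_mul_sq_add_sq_div_four_mul {a x y : ℝ} (ha : 0 < a) :
    x * y ≤ a * x ^ 2 + y ^ 2 / (4 * a) := by
  rw [← sub_nonneg]
  have key : a * x ^ 2 + y ^ 2 / (4 * a) - x * y = (2 * a * x - y) ^ 2 / (4 * a) := by
    field_simp; ring
  rw [key]; positivity

lemma tendsto_zero_of_mul_sq_le {f : ℝ → ℝ} {K : ℝ} (h : ∀ᶠ g in atTop, g * f g ^ 2 ≤ K) :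
    Tendsto f atTop (𝓝 0) := by
  have hsq : Tendsto (fun g => f g ^ 2) atTop (𝓝 0) := by
    refine squeeze_zero' (.of_forall fun g => sq_nonneg (f g)) ?_
      (tendsto_const_nhds (x := K).div_atTop tendsto_id)
    filter_upwards [h, eventually_gt_atTop 0] with g hg hpos
    rwa [id, le_div_iff₀ hpos, mul_comm]
  have habs := (Real.continuous_sqrt.tendsto 0).comp hsq
  simp only [Function.comp_def, Real.sqrt_sq_eq_abs, Real.sqrt_zero] at habs
  exact (tendsto_zero_iff_abs_tendsto_zero f).2 habs

namespace Matrix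

variable {ι κ : Type*} [Fintype ι] [Fintype κ] [DecidableEq κ]

lemma dotProduct_mulVec_mul_diagonal_mul_transpose (B : Matrix ι κ ℝ) (w : κ → ℝ) (x : ι → ℝ) :
    x ⬝ᵥ (B * diagonal w * Bᵀ) *ᵥ x = ∑ e, w e * (Bᵀ *ᵥ x) e ^ 2 := by
  rw [← mulVec_mulVec, ← mulVec_mulVec, dotProduct_mulVec, ← mulVec_transpose, dotProduct]
  simp only [mulVec_diagonal]
  exact Finset.sum_congr rfl fun e _ => by ring

lemma dotProduct_mulVec_diagonal_add_smul [DecidableEq ι] (d : ι → ℝ) (g : ℝ)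
    (B : Matrix ι κ ℝ) (w : κ → ℝ) (x : ι → ℝ) :
    x ⬝ᵥ (diagonal d + g • (B * diagonal w * Bᵀ)) *ᵥ x
      = ∑ i, d i * x i ^ 2 + g * ∑ e, w e * (Bᵀ *ᵥ x) e ^ 2 := by
  rw [add_mulVec, dotProduct_add, smul_mulVec, dotProduct_smul,
    dotProduct_mulVec_mul_diagonal_mul_transpose, dotProduct, smul_eq_mul]
  simp only [mulVec_diagonal]
  congr 1
  exact Finset.sum_congr rfl fun i _ => by ring

lemma posDef_diagonal_add_smul [DecidableEq ι] {d : ι → ℝ} (hd : ∀ i, 0 < d i) {g : ℝ}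
    (hg : 0 ≤ g) (B : Matrix ι κ ℝ) {w : κ → ℝ} (hw : ∀ e, 0 ≤ w e) :
    (diagonal d + g • (B * diagonal w * Bᵀ)).PosDef := by
  refine (PosDef.diagonal hd).add_posSemidef (PosSemidef.smul ?_ hg)
  simpa using (posSemidef_diagonal_iff.2 hw).mul_mul_conjTranspose_same B

lemma mul_sum_mul_sq_transpose_mulVec_le [DecidableEq ι] {d : ι → ℝ} (hd : ∀ i, 0 < d i)
    (g : ℝ) (B : Matrix ι κ ℝ) (w : κ → ℝ) {x v : ι → ℝ}
    (hx : (diagonal d + g • (B * diagonal w * Bᵀ)) *ᵥ x = v) :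
    g * ∑ e, w e * (Bᵀ *ᵥ x) e ^ 2 ≤ ∑ i, v i ^ 2 / (4 * d i) := by
  have hxv : x ⬝ᵥ v ≤ ∑ i, d i * x i ^ 2 + ∑ i, v i ^ 2 / (4 * d i) := by
    rw [← Finset.sum_add_distrib]
    exact Finset.sum_le_sum fun i _ => mul_le_mul_sq_add_sq_div_four_mul (hd i)
  have hquad := dotProduct_mulVec_diagonal_add_smul d g B w x
  rw [hx] at hquad
  linarith

end Matrix

theorem stmt8_general {n m : ℕ}
    (B : Matrix (Fin n) (Fin m) ℝ) (w : Fin m → ℝ) (hw : ∀ e, 0 < w e)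
    (L : Matrix (Fin n) (Fin n) ℝ) (hLdef : L = B * Matrix.diagonal w * Bᵀ)
    (d : Fin n → ℝ) (hd : ∀ i, 0 < d i) (v : Fin n → ℝ) :
    Tendsto (fun g : ℝ =>
        Bᵀ.mulVec ((Matrix.diagonal d + g • L)⁻¹.mulVec v))
      atTop (nhds 0) := by
  subst hLdef
  refine tendsto_pi_nhds.2 fun e => tendsto_zero_of_mul_sq_le
    (K := (∑ i, v i ^ 2 / (4 * d i)) / w e) ?_
  filter_upwards [eventually_ge_atTop 0] with g hg
  set M := diagonal d + g • (B * diagonal w * Bᵀ)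
  have hMx : M *ᵥ M⁻¹ *ᵥ v = v := by
    rw [mulVec_mulVec, mul_nonsing_inv _ ((posDef_diagonal_add_smul hd hg B
      fun e => (hw e).le).isUnit.map detMonoidHom), one_mulVec]
  have hedge : g * (w e * (Bᵀ *ᵥ M⁻¹ *ᵥ v) e ^ 2)
      ≤ g * ∑ e, w e * (Bᵀ *ᵥ M⁻¹ *ᵥ v) e ^ 2 :=
    mul_le_mul_of_nonneg_left
      (Finset.single_le_sum (f := fun e => w e * (Bᵀ *ᵥ M⁻¹ *ᵥ v) e ^ 2)
        (fun e _ => mul_nonneg (hw e).le (sq_nonneg _)) (Finset.mem_univ e)) hg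
  rw [le_div_iff₀ (hw e)]
  linarith [mul_sum_mul_sq_transpose_mulVec_le hd g B w hMx]

theorem stmt8 {n m : ℕ}
    (B : Matrix (Fin n) (Fin m) ℝ) (w : Fin m → ℝ) (hw : ∀ e, 0 < w e)
    (L : Matrix (Fin n) (Fin n) ℝ) (hLdef : L = B * Matrix.diagonal w * Bᵀ)
    (hker : ∀ x : Fin n → ℝ, L.mulVec x = 0 ↔ ∃ c : ℝ, x = fun _ => c)
    (d : Fin n → ℝ) (hd : ∀ i, 0 < d i) (v : Fin n → ℝ) :
    Tendsto (fun g : ℝ =>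
        Bᵀ.mulVec ((Matrix.diagonal d + g • L)⁻¹.mulVec v))
      atTop (nhds 0) :=
  stmt8_general B w hw L hLdef d hd v
end

section
/- Let $\Delta \succ 0$ be diagonal and $L$ a graph Laplacian (symmetric PSD with $L\mathbb{1} = 0$). Then $\lim_{\mathfrak{g} \to \infty} \mathbb{1}^{\mathsf{T}} \Delta (\Delta + \mathfrak{g} L)^{-1} = \mathbb{1}^{\mathsf{T}}$, i.e., for every vector $v$, $\lim_{\mathfrak{g}\to\infty} \mathbb{1}^{\mathsf{T}} \Delta (\Delta + \mathfrak{g}L)^{-1} v = \mathbb{1}^{\mathsf{T}} v$. -/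
/-!
The limit is attained exactly: since `𝟙ᵀ L = 0`, we have `𝟙ᵀ Δ = 𝟙ᵀ (Δ + g L)`, so
`𝟙ᵀ Δ (Δ + g L)⁻¹ v = 𝟙ᵀ v` for every `g ≥ 0`, where `Δ + g L` is positive definite and hence invertible.
-/

open Matrix Filter

namespace Matrix

variable {m R : Type*} [Fintype m]

theorem vecMul_eq_zero_of_isSymm [CommSemiring R] {L : Matrix m m R} (hL : L.IsSymm)
    {u : m → R} (h : L *ᵥ u = 0) : u ᵥ* L = 0 := by
  rw [← mulVec_transpose, hL.eq, h]

theorem dotProduct_mulVec_nonsing_inv_add [DecidableEq m] [CommRing R] {D E : Matrix m m R}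
    {u : m → R} (hE : u ᵥ* E = 0) (hDE : IsUnit (D + E).det) (v : m → R) :
    u ⬝ᵥ (D *ᵥ ((D + E)⁻¹ *ᵥ v)) = u ⬝ᵥ v :=
  calc u ⬝ᵥ (D *ᵥ ((D + E)⁻¹ *ᵥ v))
      = u ⬝ᵥ ((D + E) *ᵥ ((D + E)⁻¹ *ᵥ v)) := by
        rw [dotProduct_mulVec, dotProduct_mulVec u (D + E), vecMul_add, hE, add_zero]
    _ = u ⬝ᵥ v := by rw [mulVec_mulVec, mul_nonsing_inv _ hDE, one_mulVec]

end Matrix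

theorem stmt9_general {n : ℕ}
    (L : Matrix (Fin n) (Fin n) ℝ) (hL : L.PosSemidef)
    (hL1 : L.mulVec (fun _ => 1) = 0)
    (d : Fin n → ℝ) (hd : ∀ i, 0 < d i) (v : Fin n → ℝ) :
    Tendsto (fun g : ℝ =>
        dotProduct (fun _ => (1 : ℝ))
          ((Matrix.diagonal d).mulVec ((Matrix.diagonal d + g • L)⁻¹.mulVec v)))
      atTop (nhds (dotProduct (fun _ => (1 : ℝ)) v)) := by
  have hL1_vecMul : (fun _ => (1 : ℝ)) ᵥ* L = 0 :=
    vecMul_eq_zero_of_isSymm (isHermitian_iff_isSymm.mp hL.isHermitian) hL1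
  refine tendsto_const_nhds.congr' ?_
  filter_upwards [eventually_ge_atTop 0] with g hg
  have hpos : (diagonal d + g • L).PosDef :=
    (posDef_diagonal_iff.mpr hd).add_posSemidef (hL.smul hg)
  exact (dotProduct_mulVec_nonsing_inv_add (by rw [vecMul_smul, hL1_vecMul, smul_zero])
    hpos.det_pos.ne'.isUnit v).symm

theorem stmt9 {n : ℕ}
    (L : Matrix (Fin n) (Fin n) ℝ) (hL : L.PosSemidef)
    (hL1 : L.mulVec (fun _ => 1) = 0)
    (hker : ∀ x : Fin n → ℝ, L.mulVec x = 0 ↔ ∃ c : ℝ, x = fun _ => c)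
    (d : Fin n → ℝ) (hd : ∀ i, 0 < d i) (v : Fin n → ℝ) :
    Tendsto (fun g : ℝ =>
        dotProduct (fun _ => (1 : ℝ))
          ((Matrix.diagonal d).mulVec ((Matrix.diagonal d + g • L)⁻¹.mulVec v)))
      atTop (nhds (dotProduct (fun _ => (1 : ℝ)) v)) :=
  stmt9_general L hL hL1 d hd v
end

section
/- Let $P(v) = v \cdot i(v)$ where $i(v)$ implicitly satisfies the single-diode PV equation $i = i_L - i_0(\exp((v + R_s i)/(v_t \alpha)) - 1) - (v + R_s i)/R_p$ with $i_L, i_0 \geq 0$, $v_t, \alpha, R_s, R_p > 0$. Then $i(v)$ is well-defined (the defining equation has a unique solution $i$ for each $v \geq 0$) and $i$ is strictly decreasing in $v$. -/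
/-!
Writing `x = v + Rs * i` for the junction voltage, the equation reads `i = F (v + Rs * i)` with
`F x = iL - i0 * (exp (x / (vt * α)) - 1) - x / Rp` continuous and strictly decreasing. Hence
`i ↦ F (v + Rs * i) - i` is continuous and strictly decreasing with values of both signs, so it has
exactly one zero. If `v₁ < v₂` but `i(v₁) ≤ i(v₂)`, the junction voltage increases from `v₁` to
`v₂`, so `F` forces `i(v₂) < i(v₁)`, a contradiction.
-/

open Real

/-- The single-diode current as a function of the junction voltage `x = v + Rs * i`. -/
noncomputable def singleDiodeCurrent (iL i0 vt α Rp x : ℝ) : ℝ :=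
  iL - i0 * (exp (x / (vt * α)) - 1) - x / Rp

theorem strictAnti_singleDiodeCurrent (iL : ℝ) {i0 vt α Rp : ℝ} (hi0 : 0 ≤ i0)
    (hvtα : 0 < vt * α) (hRp : 0 < Rp) : StrictAnti (singleDiodeCurrent iL i0 vt α Rp) := by
  intro x y hxy
  have hexp : exp (x / (vt * α)) ≤ exp (y / (vt * α)) := by gcongr
  have hdiv : x / Rp < y / Rp := by gcongr
  have := mul_le_mul_of_nonneg_left hexp hi0
  simp only [singleDiodeCurrent]
  linarith

theorem continuous_singleDiodeCurrent (iL i0 vt α Rp : ℝ) :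
    Continuous (singleDiodeCurrent iL i0 vt α Rp) := by
  unfold singleDiodeCurrent
  fun_prop

/-- `h 0` and `0` bracket the fixed point, since `x - h x` changes sign between them. -/
theorem Antitone.existsUnique_eq_apply {h : ℝ → ℝ} (hmono : Antitone h) (hcont : Continuous h) :
    ∃! x, x = h x := by
  set g : ℝ → ℝ := fun x => h x - x
  have hg : StrictAnti g := hmono.add_strictAnti fun _ _ hab => neg_lt_neg hab
  have hsign : 0 ∈ Set.uIcc (g 0) (g (h 0)) := by
    rcases le_total 0 (h 0) with h0 | h0
    · exact Set.mem_uIcc.2 (Or.inr ⟨by linarith [hmono h0], by simpa [g] using h0⟩)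
    · exact Set.mem_uIcc.2 (Or.inl ⟨by simpa [g] using h0, by linarith [hmono h0]⟩)
  obtain ⟨x, -, hx⟩ := intermediate_value_uIcc (by fun_prop) hsign
  refine ⟨x, by linarith [show h x - x = 0 from hx], fun y hy => hg.injective ?_⟩
  simp only [g]
  linarith

theorem StrictAnti.strictAntiOn_of_eq_apply_add_mul {F f : ℝ → ℝ} {R : ℝ} {s : Set ℝ}
    (hF : StrictAnti F) (hR : 0 ≤ R) (hf : ∀ v ∈ s, f v = F (v + R * f v)) :
    StrictAntiOn f s := by
  intro v₁ hv₁ v₂ hv₂ hv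
  by_contra! hle
  have hx : v₁ + R * f v₁ < v₂ + R * f v₂ := by nlinarith
  have := hF hx
  rw [← hf v₁ hv₁, ← hf v₂ hv₂] at this
  linarith

theorem stmt12_general (iL i0 vt α Rs Rp : ℝ)
    (hi0 : 0 ≤ i0) (hvt : 0 < vt) (hα : 0 < α)
    (hRs : 0 < Rs) (hRp : 0 < Rp) :
    (∀ v : ℝ, 0 ≤ v → ∃! i : ℝ,
      i = iL - i0 * (Real.exp ((v + Rs * i) / (vt * α)) - 1) - (v + Rs * i) / Rp) ∧
    ∀ f : ℝ → ℝ,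
      (∀ v : ℝ, 0 ≤ v →
        f v = iL - i0 * (Real.exp ((v + Rs * f v) / (vt * α)) - 1) - (v + Rs * f v) / Rp) →
      StrictAntiOn f (Set.Ici 0) := by
  have hF := strictAnti_singleDiodeCurrent iL hi0 (mul_pos hvt hα) hRp
  refine ⟨fun v _ => ?_, fun f hf => hF.strictAntiOn_of_eq_apply_add_mul hRs.le hf⟩
  have hjunction : Monotone fun i => v + Rs * i := (monotone_id.const_mul hRs.le).const_add v
  exact (hF.antitone.comp_monotone hjunction).existsUnique_eq_apply
    ((continuous_singleDiodeCurrent iL i0 vt α Rp).comp (by fun_prop))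

theorem stmt12 (iL i0 vt α Rs Rp : ℝ)
    (hiL : 0 ≤ iL) (hi0 : 0 ≤ i0) (hvt : 0 < vt) (hα : 0 < α)
    (hRs : 0 < Rs) (hRp : 0 < Rp) :
    (∀ v : ℝ, 0 ≤ v → ∃! i : ℝ,
      i = iL - i0 * (Real.exp ((v + Rs * i) / (vt * α)) - 1) - (v + Rs * i) / Rp) ∧
    ∀ f : ℝ → ℝ,
      (∀ v : ℝ, 0 ≤ v →
        f v = iL - i0 * (Real.exp ((v + Rs * f v) / (vt * α)) - 1) - (v + Rs * f v) / Rp) →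
      StrictAntiOn f (Set.Ici 0) :=
  stmt12_general iL i0 vt α Rs Rp hi0 hvt hα hRs hRp
end

section
/- Consider the scalar closed-loop dynamics of a single VSC with curtailed dc source feeding directly into its dc link: $c\,\dot{v} = P - P_{ac}$, $T\dot{P} = -P - k_g v$, with $c, T, k_g > 0$, where the ac power satisfies $P_{ac} = b\,\theta$ (linearized power flow to an infinite bus at angle 0, $b > 0$) and the dual-port GFM control gives $\dot{\theta} = k_p \dot{v} + k_\omega v$ with $k_p, k_\omega > 0$. Then the origin of the resulting third-order linear system in $(\theta, v, P)$ is asymptotically stable. -/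
/-!
The characteristic polynomial of the closed-loop matrix is
`s³ + a₂ s² + a₁ s + a₀` with `a₂ = k_p b/c + 1/T`, `a₁ = b k_ω/c + (k_p b + k_g)/(cT)` and
`a₀ = b k_ω/(cT)`, all positive, and the Hurwitz determinant
`a₂ a₁ - a₀ = (k_p b/c) a₁ + (k_p b + k_g)/(cT²)` is positive as well. By the Routh–Hurwitz
criterion for cubics (a root with nonnegative real part is excluded by separating real and
imaginary parts of the equation), every eigenvalue lies in the open left half-plane.
-/

open Matrix

theorem Matrix.mem_spectrum_fin_three_iff {K : Type*} [Field K] (A : Matrix (Fin 3) (Fin 3) K)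
    (μ : K) :
    μ ∈ spectrum K A ↔
      μ ^ 3 - A.trace * μ ^ 2
        + (A 0 0 * A 1 1 - A 0 1 * A 1 0 + A 0 0 * A 2 2 - A 0 2 * A 2 0
            + A 1 1 * A 2 2 - A 1 2 * A 2 1) * μ - A.det = 0 := by
  rw [spectrum.mem_iff, isUnit_iff_isUnit_det, isUnit_iff_ne_zero, not_not, det_fin_three,
    det_fin_three, trace_fin_three]
  simp only [algebraMap_matrix_apply, sub_apply, Fin.isValue, ↓reduceIte, Fin.reduceEq]
  constructor <;> intro h <;> linear_combination h

theorem Complex.re_neg_of_cubic_eq_zero {a₂ a₁ a₀ : ℝ} (h₂ : 0 < a₂) (h₁ : 0 < a₁) (h₀ : 0 < a₀)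
    (hH : a₀ < a₂ * a₁) {z : ℂ} (hz : z ^ 3 + a₂ * z ^ 2 + a₁ * z + a₀ = 0) : z.re < 0 := by
  have hre := congrArg Complex.re hz
  have him := congrArg Complex.im hz
  simp only [pow_succ, pow_zero, one_mul, add_re, add_im, mul_re, mul_im, ofReal_re, ofReal_im,
    zero_re, zero_im, zero_mul, sub_zero, add_zero] at hre him
  set x := z.re
  set y := z.im
  by_contra! hx
  have hx2 : 0 ≤ x ^ 2 := sq_nonneg x
  have hx3 : 0 ≤ x ^ 3 := pow_nonneg hx 3
  rcases eq_or_ne y 0 with hy | hy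
  · rw [hy] at hre
    nlinarith [mul_nonneg h₂.le hx2, mul_nonneg h₁.le hx]
  · -- eliminating `y²` from the real part leaves two sides of opposite signs
    have hy2 : y ^ 2 = 3 * x ^ 2 + 2 * a₂ * x + a₁ := by
      have : y * (3 * x ^ 2 - y ^ 2 + 2 * a₂ * x + a₁) = 0 := by linear_combination him
      linarith [(mul_eq_zero.mp this).resolve_left hy]
    have : 8 * x ^ 3 + 8 * a₂ * x ^ 2 + 2 * (a₁ + a₂ ^ 2) * x = a₀ - a₂ * a₁ := by
      linear_combination -hre - (a₂ + 3 * x) * hy2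
    nlinarith [mul_nonneg h₂.le hx2, mul_nonneg (add_pos h₁ (pow_pos h₂ 2)).le hx]

theorem stmt13 (c T kg b kp kω : ℝ)
    (hc : 0 < c) (hT : 0 < T) (hkg : 0 < kg) (hb : 0 < b)
    (hkp : 0 < kp) (hkω : 0 < kω) :
    ∀ μ ∈ spectrum ℂ
      ((!![-kp * b / c, kω, kp / c;
           -b / c, 0, 1 / c;
           0, -kg / T, -1 / T] : Matrix (Fin 3) (Fin 3) ℝ).map Complex.ofReal),
      μ.re < 0 := by
  intro μ hμ
  have hchar := (mem_spectrum_fin_three_iff _ μ).1 hμ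
  simp only [trace_fin_three, det_fin_three, map_apply, of_apply, cons_val', cons_val_zero,
    cons_val_one, cons_val, cons_val_fin_one] at hchar
  push_cast at hchar
  have hHurwitz : b * kω / (c * T) < (kp * b / c + 1 / T) *
      (b * kω / c + kp * b / (c * T) + kg / (c * T)) := by
    have : 0 < kp * b / c * (b * kω / c + kp * b / (c * T) + kg / (c * T)) +
        1 / T * (kp * b / (c * T) + kg / (c * T)) := by positivity
    linear_combination this
  refine Complex.re_neg_of_cubic_eq_zero (by positivity) (by positivity) (by positivity)
    hHurwitz ?_
  push_cast
  linear_combination hchar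
end

section
/- Consider the two-node point-to-point HVDC model: two dc capacitor dynamics $c_1\dot{v}_1 = -P_{ac,1} - g(v_1 - v_2)$, $c_2\dot{v}_2 = -P_{ac,2} - g(v_2 - v_1)$ with $c_1, c_2, g > 0$, dual-port GFM controls $\dot{\theta}_i = k_{p,i}\dot{v}_i + k_{\omega,i} v_i$, and linearized ac powers $P_{ac,i} = b_i \theta_i$ ($b_i > 0$, each ac side an infinite bus). If $k_{p,i}/k_{\omega,i} < 2 c_i / g$ for $i = 1, 2$ and all gains are positive, then the origin of the resulting four-state linear system in $(\theta_1, \theta_2, v_1, v_2)$ is asymptotically stable. -/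
/-!
With `zᵢ = θᵢ - k_{p,i} vᵢ`, the controller reads `ż_i = k_{ω,i} vᵢ`, and
`V = Σᵢ (bᵢ / k_{ω,i}) |zᵢ|² + cᵢ |vᵢ|²` is a Lyapunov function: along an eigenvector with
eigenvalue `μ` one gets `Re μ · V = -(Σᵢ bᵢ k_{p,i} |vᵢ|² + g |v₁ - v₂|²)`. An eigenvector with
`v = 0` would also have `θ = 0`, so both sides are nonzero and `Re μ < 0`.
-/

open Matrix ComplexConjugate

theorem Matrix.exists_mulVec_eq_smul_of_mem_spectrum {K n : Type*} [Field K] [Fintype n]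
    [DecidableEq n] {A : Matrix n n K} {μ : K} (h : μ ∈ spectrum K A) :
    ∃ x ≠ 0, A *ᵥ x = μ • x := by
  rw [← spectrum_toLin', ← Module.End.hasEigenvalue_iff_mem_spectrum] at h
  obtain ⟨x, hx⟩ := h.exists_hasEigenvector
  exact ⟨x, hx.2, hx.apply_eq_smul⟩

namespace Complex

theorem re_conj_mul_mul_self (μ z : ℂ) : (conj z * (μ * z)).re = μ.re * normSq z := by
  rw [mul_left_comm, ← normSq_eq_conj_mul_self, re_mul_ofReal]

theorem weighted_normSq_add_pos {a₁ a₂ : ℝ} (ha₁ : 0 < a₁) (ha₂ : 0 < a₂) {v₁ v₂ : ℂ}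
    (hv : v₁ ≠ 0 ∨ v₂ ≠ 0) : 0 < a₁ * normSq v₁ + a₂ * normSq v₂ := by
  rcases hv with hv | hv
  · linarith [mul_pos ha₁ (normSq_pos.2 hv), mul_nonneg ha₂.le (normSq_nonneg v₂)]
  · linarith [mul_pos ha₂ (normSq_pos.2 hv), mul_nonneg ha₁.le (normSq_nonneg v₁)]

end Complex

open Complex

/-- `u` is the dc current injected into the converter's capacitor. -/
theorem re_mul_areaEnergy_eq {μ θ v u : ℂ} {b c kp kω : ℝ} (hkω : kω ≠ 0)
    (hθ : μ * (θ - kp * v) = kω * v) (hv : c * (μ * v) = -b * θ + u) :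
    μ.re * (b / kω * normSq (θ - kp * v) + c * normSq v)
      = -(b * kp * normSq v) + (conj v * u).re := by
  set z := θ - kp * v with hz
  have hθz : θ = z + kp * v := by rw [hz]; ring
  have hzz : μ.re * normSq z = kω * (conj z * v).re := by
    rw [← re_conj_mul_mul_self, hθ, mul_left_comm, re_ofReal_mul]
  have hvv : c * (μ.re * normSq v)
      = -b * (conj z * v).re - b * kp * normSq v + (conj v * u).re := by
    calc c * (μ.re * normSq v) = (conj v * (c * (μ * v))).re := by
          rw [mul_left_comm (conj v), re_ofReal_mul, re_conj_mul_mul_self]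
      _ = _ := by
          rw [hv, hθz]
          simp only [add_re, mul_re, neg_re, neg_im, ofReal_re, ofReal_im, conj_re, conj_im,
            normSq_apply, add_im, mul_im]
          ring
  field_simp
  linear_combination b * hzz + kω * hvv

theorem re_conj_mul_dcLine_add (g : ℝ) (v₁ v₂ : ℂ) :
    (conj v₁ * (-g * (v₁ - v₂))).re + (conj v₂ * (-g * (v₂ - v₁))).re
      = -(g * normSq (v₁ - v₂)) := by
  simp only [mul_re, mul_im, neg_re, neg_im, sub_re, sub_im, ofReal_re, ofReal_im, conj_re,
    conj_im, normSq_apply]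
  ring

theorem re_neg_of_pointToPoint_eigen {μ θ₁ θ₂ v₁ v₂ : ℂ} {c₁ c₂ g b₁ b₂ kp₁ kp₂ kω₁ kω₂ : ℝ}
    (hc₁ : 0 < c₁) (hc₂ : 0 < c₂) (hg : 0 ≤ g) (hb₁ : 0 < b₁) (hb₂ : 0 < b₂)
    (hkp₁ : 0 < kp₁) (hkp₂ : 0 < kp₂) (hkω₁ : 0 < kω₁) (hkω₂ : 0 < kω₂)
    (hθ₁ : μ * (θ₁ - kp₁ * v₁) = kω₁ * v₁) (hθ₂ : μ * (θ₂ - kp₂ * v₂) = kω₂ * v₂)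
    (hv₁ : c₁ * (μ * v₁) = -b₁ * θ₁ + -g * (v₁ - v₂))
    (hv₂ : c₂ * (μ * v₂) = -b₂ * θ₂ + -g * (v₂ - v₁)) (hv : v₁ ≠ 0 ∨ v₂ ≠ 0) :
    μ.re < 0 := by
  have E₁ := re_mul_areaEnergy_eq hkω₁.ne' hθ₁ hv₁
  have E₂ := re_mul_areaEnergy_eq hkω₂.ne' hθ₂ hv₂
  have hline := re_conj_mul_dcLine_add g v₁ v₂
  have hV : 0 < b₁ / kω₁ * normSq (θ₁ - kp₁ * v₁) + c₁ * normSq v₁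
      + (b₂ / kω₂ * normSq (θ₂ - kp₂ * v₂) + c₂ * normSq v₂) := by
    linarith [weighted_normSq_add_pos hc₁ hc₂ hv,
      mul_nonneg (div_pos hb₁ hkω₁).le (normSq_nonneg (θ₁ - kp₁ * v₁)),
      mul_nonneg (div_pos hb₂ hkω₂).le (normSq_nonneg (θ₂ - kp₂ * v₂))]
  have hD : 0 < b₁ * kp₁ * normSq v₁ + b₂ * kp₂ * normSq v₂ + g * normSq (v₁ - v₂) := by
    linarith [weighted_normSq_add_pos (mul_pos hb₁ hkp₁) (mul_pos hb₂ hkp₂) hv,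
      mul_nonneg hg (normSq_nonneg (v₁ - v₂))]
  refine (neg_iff_pos_of_mul_neg ?_).mpr hV
  linear_combination E₁ + E₂ + hline + hD

noncomputable def pointToPointMatrix (c1 c2 g b1 b2 kp1 kp2 kω1 kω2 : ℝ) :
    Matrix (Fin 4) (Fin 4) ℝ :=
  !![-kp1 * b1 / c1, 0, kω1 - kp1 * g / c1, kp1 * g / c1;
     0, -kp2 * b2 / c2, kp2 * g / c2, kω2 - kp2 * g / c2;
     -b1 / c1, 0, -g / c1, g / c1;
     0, -b2 / c2, g / c2, -g / c2]

theorem pointToPointMatrix_eigen_equations {c1 c2 g b1 b2 kp1 kp2 kω1 kω2 : ℝ} (hc1 : c1 ≠ 0)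
    (hc2 : c2 ≠ 0) {μ : ℂ} {x : Fin 4 → ℂ}
    (hx : (pointToPointMatrix c1 c2 g b1 b2 kp1 kp2 kω1 kω2).map ofReal *ᵥ x = μ • x) :
    μ * (x 0 - kp1 * x 2) = kω1 * x 2 ∧ μ * (x 1 - kp2 * x 3) = kω2 * x 3 ∧
      c1 * (μ * x 2) = -b1 * x 0 + -g * (x 2 - x 3) ∧
      c2 * (μ * x 3) = -b2 * x 1 + -g * (x 3 - x 2) := by
  have hc1' : (c1 : ℂ) ≠ 0 := ofReal_ne_zero.2 hc1
  have hc2' : (c2 : ℂ) ≠ 0 := ofReal_ne_zero.2 hc2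
  have r0 := congrFun hx 0
  have r1 := congrFun hx 1
  have r2 := congrFun hx 2
  have r3 := congrFun hx 3
  simp only [mulVec, dotProduct, pointToPointMatrix, neg_mul, map_apply, of_apply, cons_val',
    cons_val_fin_one, cons_val_zero, Fin.sum_univ_four, ofReal_div, ofReal_neg, ofReal_mul,
    cons_val_one, ofReal_zero, zero_mul, add_zero, cons_val, ofReal_sub, Pi.smul_apply,
    smul_eq_mul, zero_add] at r0 r1 r2 r3
  refine ⟨?_, ?_, ?_, ?_⟩
  · linear_combination (kp1 : ℂ) * r2 - r0
  · linear_combination (kp2 : ℂ) * r3 - r1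
  · rw [← r2]; field_simp; ring
  · rw [← r3]; field_simp; ring

theorem stmt19_general (c1 c2 g b1 b2 kp1 kp2 kω1 kω2 : ℝ)
    (hc1 : 0 < c1) (hc2 : 0 < c2) (hg : 0 < g)
    (hb1 : 0 < b1) (hb2 : 0 < b2)
    (hkp1 : 0 < kp1) (hkp2 : 0 < kp2) (hkω1 : 0 < kω1) (hkω2 : 0 < kω2) :
    ∀ μ ∈ spectrum ℂ
      ((!![-kp1 * b1 / c1, 0, kω1 - kp1 * g / c1, kp1 * g / c1;
           0, -kp2 * b2 / c2, kp2 * g / c2, kω2 - kp2 * g / c2;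
           -b1 / c1, 0, -g / c1, g / c1;
           0, -b2 / c2, g / c2, -g / c2] : Matrix (Fin 4) (Fin 4) ℝ).map
        Complex.ofReal),
      μ.re < 0 := by
  intro μ hμ
  obtain ⟨x, hx0, hx⟩ := Matrix.exists_mulVec_eq_smul_of_mem_spectrum hμ
  obtain ⟨hθ1, hθ2, hv1, hv2⟩ := pointToPointMatrix_eigen_equations hc1.ne' hc2.ne' hx
  refine re_neg_of_pointToPoint_eigen hc1 hc2 hg.le hb1 hb2 hkp1 hkp2 hkω1 hkω2 hθ1 hθ2 hv1 hv2 ?_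
  by_contra! hv
  obtain ⟨h2, h3⟩ := hv
  rw [h2, h3] at hv1 hv2
  have h0 : x 0 = 0 := by simpa [hb1.ne'] using hv1
  have h1 : x 1 = 0 := by simpa [hb2.ne'] using hv2
  exact hx0 (funext fun i => by fin_cases i <;> assumption)

theorem stmt19 (c1 c2 g b1 b2 kp1 kp2 kω1 kω2 : ℝ)
    (hc1 : 0 < c1) (hc2 : 0 < c2) (hg : 0 < g)
    (hb1 : 0 < b1) (hb2 : 0 < b2)
    (hkp1 : 0 < kp1) (hkp2 : 0 < kp2) (hkω1 : 0 < kω1) (hkω2 : 0 < kω2)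
    (hcond1 : kp1 / kω1 < 2 * c1 / g) (hcond2 : kp2 / kω2 < 2 * c2 / g) :
    ∀ μ ∈ spectrum ℂ
      ((!![-kp1 * b1 / c1, 0, kω1 - kp1 * g / c1, kp1 * g / c1;
           0, -kp2 * b2 / c2, kp2 * g / c2, kω2 - kp2 * g / c2;
           -b1 / c1, 0, -g / c1, g / c1;
           0, -b2 / c2, g / c2, -g / c2] : Matrix (Fin 4) (Fin 4) ℝ).map
        Complex.ofReal),
      μ.re < 0 :=
  stmt19_general c1 c2 g b1 b2 kp1 kp2 kω1 kω2 hc1 hc2 hg hb1 hb2 hkp1 hkp2 hkω1 hkω2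
end
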